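/- arXiv:2410.21726 — 2 statements merged into one kernel-verified Lean document; each statement's English description precedes it below -/
import Mathlib

section
/- Let V be a finite-dimensional vector space with a nondegenerate symmetric bilinear form, let F be a subspace, and let p ∈ V be a vector with q(p,p) = 0 and p ∉ F^⊥. Set F_p := span(p, p^⊥ ∩ F). Then F^⊥ ∩ F_p^⊥ = F^⊥ ∩ p^⊥, and this space has codimension one in F_p^⊥. -/
open Module

lemma orth_sup_aux {K V : Type*} [Field K] [AddCommGroup V] [Module K V]
    (B : LinearMap.BilinForm K V) (A C : Submodule K V) :
    B.orthogonal (A ⊔ C) = B.orthogonal A ⊓ B.orthogonal C := by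
  refine le_antisymm (le_inf (B.orthogonal_le le_sup_left) (B.orthogonal_le le_sup_right)) ?_
  rintro x ⟨hxA, hxC⟩ n hn
  obtain ⟨a, ha, c, hc, rfl⟩ := Submodule.mem_sup.mp hn
  show B (a + c) x = 0
  rw [map_add, LinearMap.add_apply, hxA a ha, hxC c hc, add_zero]

/-- Let `B` be a nondegenerate symmetric bilinear form on a finite-dimensional vector space
`V`, `F` a subspace, and `p ∈ V` with `B p p = 0` and `p ∉ F^⊥`.  Set
`F_p := span(p, p^⊥ ∩ F)`.  Then `F^⊥ ∩ F_p^⊥ = F^⊥ ∩ p^⊥`, and this space has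
codimension one in `F_p^⊥`. -/
theorem orthogonal_inf_span_orthogonal
    {K V : Type*} [Field K] [AddCommGroup V] [Module K V] [FiniteDimensional K V]
    (B : LinearMap.BilinForm K V) (hB : B.Nondegenerate)
    (hsymm : ∀ x y : V, B x y = B y x) (F : Submodule K V) (p : V)
    (hp : B p p = 0) (hpF : p ∉ B.orthogonal F)
    (Fp : Submodule K V)
    (hFp : Fp = Submodule.span K {p} ⊔ (B.orthogonal (Submodule.span K {p}) ⊓ F)) :
    B.orthogonal F ⊓ B.orthogonal Fp
        = B.orthogonal F ⊓ B.orthogonal (Submodule.span K {p}) ∧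
    finrank K ↥(B.orthogonal F ⊓ B.orthogonal (Submodule.span K {p})) + 1
        = finrank K ↥(B.orthogonal Fp) := by
  have hrefl : B.IsRefl := fun x y h => by rw [hsymm]; exact h
  set P := Submodule.span K {p} with hP
  have hp0 : p ≠ 0 := fun h => hpF (h ▸ Submodule.zero_mem _)
  -- p is orthogonal to itself, hence span p ≤ (span p)^⊥
  have hpP : p ∈ B.orthogonal P := by
    intro n hn
    obtain ⟨c, rfl⟩ := Submodule.mem_span_singleton.mp hn
    show B (c • p) p = 0
    rw [map_smul, LinearMap.smul_apply, hp, smul_zero]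
  have hPle : P ≤ B.orthogonal P := by
    rw [hP, Submodule.span_le, Set.singleton_subset_iff]; exact hpP
  -- orthogonal of Fp
  have hOFp : B.orthogonal Fp = B.orthogonal P ⊓ B.orthogonal (B.orthogonal P ⊓ F) := by
    rw [hFp, orth_sup_aux]
  -- (P^⊥ ⊓ F)^⊥ = P ⊔ F^⊥
  have hkey : B.orthogonal (B.orthogonal P ⊓ F) = P ⊔ B.orthogonal F := by
    have h1 : B.orthogonal P ⊓ F
        = B.orthogonal (P ⊔ B.orthogonal F) := by
      rw [orth_sup_aux, B.orthogonal_orthogonal hB hrefl]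
    rw [h1, B.orthogonal_orthogonal hB hrefl]
  -- Fp^⊥ = P ⊔ (F^⊥ ⊓ P^⊥), by the modular law
  have hOFp' : B.orthogonal Fp = P ⊔ (B.orthogonal F ⊓ B.orthogonal P) := by
    rw [hOFp, hkey, inf_comm, sup_inf_assoc_of_le (B.orthogonal F) hPle]
  -- first part
  have hfirst : B.orthogonal F ⊓ B.orthogonal Fp
      = B.orthogonal F ⊓ B.orthogonal P := by
    refine le_antisymm ?_ ?_
    · rw [hOFp]
      exact inf_le_inf_left _ inf_le_left
    · refine le_inf inf_le_left ?_
      rw [hOFp]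
      exact le_inf inf_le_right (le_trans inf_le_left (B.orthogonal_le inf_le_right))
  refine ⟨hfirst, ?_⟩
  -- disjointness: P ⊓ F^⊥ = ⊥
  have hdisj : P ⊓ (B.orthogonal F ⊓ B.orthogonal P) = ⊥ := by
    rw [eq_bot_iff]
    rintro x ⟨hxP, hxF, -⟩
    obtain ⟨c, rfl⟩ := Submodule.mem_span_singleton.mp hxP
    rcases eq_or_ne c 0 with rfl | hc
    · simp
    · exact absurd (by simpa [hc] using Submodule.smul_mem _ c⁻¹ hxF) hpF
  have hcount := Submodule.finrank_sup_add_finrank_inf_eq P (B.orthogonal F ⊓ B.orthogonal P)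
  have hPrank : finrank K ↥P = 1 := by rw [hP]; exact finrank_span_singleton hp0
  rw [hdisj, hPrank, finrank_bot K V] at hcount
  rw [hOFp']
  omega
end

section
/- Let V be a finite-dimensional vector space with a nondegenerate symmetric bilinear form q and let p ∈ V be nonzero. For any subspaces Λ, F of V with p ∈ Λ, one has dim(Λ ∩ (p^⊥ ∩ F)^⊥) ≥ dim(span p) + dim(Λ ∩ F^⊥) whenever p ∉ F^⊥ and Λ ⊆ p^⊥. -/
open Module

/-- Let `B` be a nondegenerate symmetric bilinear form on a finite-dimensional vector space
`V`.  For any subspaces `Λ`, `F` and a vector `p ∈ Λ`, if `p ∉ F^⊥` and `Λ ⊆ p^⊥`, then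
`dim(Λ ∩ (p^⊥ ∩ F)^⊥) ≥ dim(span p) + dim(Λ ∩ F^⊥)`. -/
theorem finrank_inf_orthogonal_ge
    {K V : Type*} [Field K] [AddCommGroup V] [Module K V] [FiniteDimensional K V]
    (B : LinearMap.BilinForm K V) (hB : B.Nondegenerate)
    (hsymm : ∀ x y : V, B x y = B y x) (Λ F : Submodule K V) (p : V)
    (hpΛ : p ∈ Λ) (hpF : p ∉ B.orthogonal F)
    (hΛp : Λ ≤ B.orthogonal (Submodule.span K {p})) :
    finrank K ↥(Submodule.span K {p}) + finrank K ↥(Λ ⊓ B.orthogonal F)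
      ≤ finrank K ↥(Λ ⊓ B.orthogonal (B.orthogonal (Submodule.span K {p}) ⊓ F)) := by
  set P := Submodule.span K {p} with hP
  have hdisj : P ⊓ (Λ ⊓ B.orthogonal F) = ⊥ := by
    rw [Submodule.eq_bot_iff]
    rintro x ⟨hxP, -, hxF⟩
    obtain ⟨c, rfl⟩ := Submodule.mem_span_singleton.mp hxP
    rcases eq_or_ne c 0 with rfl | hc
    · simp
    · exact absurd (by simpa [hc] using (B.orthogonal F).smul_mem c⁻¹ hxF) hpF
  have hle : P ⊔ (Λ ⊓ B.orthogonal F)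
      ≤ Λ ⊓ B.orthogonal (B.orthogonal P ⊓ F) := by
    refine sup_le ?_ ?_
    · refine le_inf ?_ ?_
      · rw [Submodule.span_le]; simpa using hpΛ
      · rw [Submodule.span_le]
        rintro x hx
        simp only [Set.mem_singleton_iff] at hx
        intro y hy
        have hyp : B x y = 0 := hy.1 x (hx ▸ Submodule.mem_span_singleton_self _)
        exact (hsymm y x).trans hyp
    · refine le_inf inf_le_left ?_
      exact le_trans inf_le_right (B.orthogonal_le inf_le_right)
  calc finrank K ↥P + finrank K ↥(Λ ⊓ B.orthogonal F)
      = finrank K ↥(P ⊔ (Λ ⊓ B.orthogonal F)) + finrank K ↥(P ⊓ (Λ ⊓ B.orthogonal F)) :=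
        (Submodule.finrank_sup_add_finrank_inf_eq _ _).symm
    _ = finrank K ↥(P ⊔ (Λ ⊓ B.orthogonal F)) := by rw [hdisj]; simp
    _ ≤ _ := Submodule.finrank_mono hle
end
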